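/- Let δ ∈ [0,1] and let A be a d×d complex matrix with a singular value decomposition A = U·Σ·V† in which every diagonal entry of Σ lies in the interval [1−δ, 1]. Set B = U·√(I−Σ²)·V†, where the square root is applied entrywise to the diagonal. Then the 2d×2d block matrix A₀ = [[A, −B],[B, A]] (i.e., A₀ = |0⟩⟨0|⊗A − |0⟩⟨1|⊗B + |1⟩⟨0|⊗B + |1⟩⟨1|⊗A) is unitary, and for every unit vector φ ∈ ℂ^d one has ‖|0⟩⊗(Aφ) − A₀(|0⟩⊗φ)‖ ≤ √(2δ) and ‖|0⟩⊗(A†φ) − A₀†(|0⟩⊗φ)‖ ≤ √(2δ), where |0⟩ denotes the first standard basis vector of ℂ² and ‖·‖ is the Euclidean norm. -/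

import Mathlib

open scoped Matrix Kronecker ComplexOrder

/-- The operator (spectral) norm of a square complex matrix. -/
noncomputable def opNorm {n : Type*} [Fintype n] [DecidableEq n] (A : Matrix n n ℂ) : ℝ :=
  ‖Matrix.toEuclideanCLM (𝕜 := ℂ) A‖

/-- The positive semidefinite square root of a positive semidefinite matrix
(Mathlib's former `Matrix.PosSemidef.sqrt`, removed since; restored with its old definition). -/
noncomputable def Matrix.PosSemidef.sqrt {n 𝕜 : Type*} [Fintype n] [RCLike 𝕜] [DecidableEq n]
    {A : Matrix n n 𝕜} (hA : A.PosSemidef) : Matrix n n 𝕜 :=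
  (hA.1.eigenvectorUnitary : Matrix n n 𝕜) *
    Matrix.diagonal ((↑) ∘ (Real.sqrt ·) ∘ hA.1.eigenvalues) *
    (star hA.1.eigenvectorUnitary : Matrix n n 𝕜)

/-- The trace norm `‖A‖₁ = Tr √(Aᴴ A)` of a square complex matrix. -/
noncomputable def traceNorm {n : Type*} [Fintype n] [DecidableEq n] (A : Matrix n n ℂ) : ℝ :=
  ((Matrix.posSemidef_conjTranspose_mul_self A).sqrt.trace).re

/-- The (square-root) fidelity `F(ρ,σ) = ‖√ρ √σ‖₁` of positive semidefinite matrices. -/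
noncomputable def fidelity {n : Type*} [Fintype n] [DecidableEq n] {ρ σ : Matrix n n ℂ}
    (hρ : ρ.PosSemidef) (hσ : σ.PosSemidef) : ℝ :=
  traceNorm (hρ.sqrt * hσ.sqrt)

/-- Functional calculus for a Hermitian matrix: `f(A) = Σ_i f(λ_i) |v_i⟩⟨v_i|`. -/
noncomputable def matFun {n : Type*} [Fintype n] [DecidableEq n] {A : Matrix n n ℂ}
    (hA : A.IsHermitian) (f : ℝ → ℝ) : Matrix n n ℂ :=
  (hA.eigenvectorUnitary : Matrix n n ℂ) *
    Matrix.diagonal (fun i => (f (hA.eigenvalues i) : ℂ)) *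
    (star (hA.eigenvectorUnitary : Matrix n n ℂ))

/-- Partial trace over the first tensor factor. -/
noncomputable def ptraceA {a b : Type*} [Fintype a] (X : Matrix (a × b) (a × b) ℂ) :
    Matrix b b ℂ :=
  Matrix.of fun i j => ∑ k, X (k, i) (k, j)

/-- Partial trace over the second tensor factor. -/
noncomputable def ptraceB {a b : Type*} [Fintype b] (X : Matrix (a × b) (a × b) ℂ) :
    Matrix a a ℂ :=
  Matrix.of fun i j => ∑ k, X (i, k) (j, k)

/-- The outer product `|ψ⟩⟨φ|`. -/
def outer {a : Type*} (ψ φ : a → ℂ) : Matrix a a ℂ :=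
  Matrix.of fun i j => ψ i * (starRingEnd ℂ) (φ j)

/-- The Euclidean norm of a finitely supported complex vector. -/
noncomputable def evnorm {a : Type*} [Fintype a] (v : a → ℂ) : ℝ :=
  Real.sqrt (∑ i, ‖v i‖ ^ 2)

/-!
Since `s_i² + (√(1 - s_i²))² = 1`, the blocks satisfy `A†A + B†B = 1` and `A†B = B†A`, which is
exactly the unitarity of `[[A, -B], [B, A]]`. Applied to `|0⟩ ⊗ φ`, the two errors are the
lower blocks `-Bφ` and `B†φ`, and `B` has singular values `√(1 - s_i²) ≤ √(2δ)`.
-/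

open Matrix

section UnitaryBlocks

variable {n α : Type*} [Fintype n] [DecidableEq n] [CommRing α] [StarRing α]

theorem conjTranspose_svd (U V : Matrix n n α) (c : n → α) :
    (U * diagonal c * Vᴴ)ᴴ = V * diagonal (star c) * Uᴴ := by
  simp only [conjTranspose_mul, conjTranspose_conjTranspose, diagonal_conjTranspose,
    Matrix.mul_assoc]

theorem conjTranspose_mul_svd {U : Matrix n n α} (hU : U ∈ unitaryGroup n α) (V : Matrix n n α)
    (c c' : n → α) :
    (U * diagonal c * Vᴴ)ᴴ * (U * diagonal c' * Vᴴ) = V * diagonal (star c * c') * Vᴴ := by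
  have hUU : Uᴴ * U = 1 := hU.1
  rw [conjTranspose_svd]
  simp only [Matrix.mul_assoc]
  rw [← Matrix.mul_assoc Uᴴ U, hUU, Matrix.one_mul, ← Matrix.mul_assoc (diagonal _),
    diagonal_mul_diagonal]
  rfl

theorem fromBlocks_neg_mem_unitaryGroup {A B : Matrix n n α} (hAB : Aᴴ * A + Bᴴ * B = 1)
    (hcomm : Aᴴ * B = Bᴴ * A) : fromBlocks A (-B) B A ∈ unitaryGroup (n ⊕ n) α := by
  rw [mem_unitaryGroup_iff', star_eq_conjTranspose, fromBlocks_conjTranspose,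
    fromBlocks_multiply, ← fromBlocks_one]
  simp only [conjTranspose_neg, Matrix.mul_neg, Matrix.neg_mul, neg_neg, hcomm, hAB,
    neg_add_cancel, add_comm (Bᴴ * B)]

end UnitaryBlocks

theorem fromBlocks_svd_mem_unitaryGroup {n : Type*} [Fintype n] [DecidableEq n]
    {U V : Matrix n n ℂ} (hU : U ∈ unitaryGroup n ℂ) (hV : V ∈ unitaryGroup n ℂ) {a b : n → ℝ}
    (hab : ∀ i, a i ^ 2 + b i ^ 2 = 1) :
    fromBlocks (U * diagonal (fun i => (a i : ℂ)) * Vᴴ) (-(U * diagonal (fun i => (b i : ℂ)) * Vᴴ))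
      (U * diagonal (fun i => (b i : ℂ)) * Vᴴ) (U * diagonal (fun i => (a i : ℂ)) * Vᴴ) ∈
      unitaryGroup (n ⊕ n) ℂ := by
  apply fromBlocks_neg_mem_unitaryGroup
  · have hdiag : diagonal (star (fun i => (a i : ℂ)) * (fun i => (a i : ℂ))) +
        diagonal (star (fun i => (b i : ℂ)) * (fun i => (b i : ℂ))) = 1 := by
      rw [diagonal_add, ← diagonal_one]
      congr 1
      funext i
      simpa [sq] using congrArg ((↑) : ℝ → ℂ) (hab i)
    rw [conjTranspose_mul_svd hU, conjTranspose_mul_svd hU, ← Matrix.add_mul,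
      ← Matrix.mul_add, hdiag, Matrix.mul_one]
    exact hV.2
  · rw [conjTranspose_mul_svd hU, conjTranspose_mul_svd hU]
    congr 3
    funext i
    simp [mul_comm]

section EuclideanNorm

variable {n : Type*} [Fintype n]

theorem star_dotProduct_self_eq (v : n → ℂ) : star v ⬝ᵥ v = ((∑ i, ‖v i‖ ^ 2 : ℝ) : ℂ) := by
  simp [dotProduct, Complex.conj_mul', Complex.ofReal_sum]

theorem evnorm_neg (v : n → ℂ) : evnorm (-v) = evnorm v := by
  simp [evnorm]

theorem evnorm_mulVec_of_mem_unitaryGroup [DecidableEq n] {U : Matrix n n ℂ}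
    (hU : U ∈ unitaryGroup n ℂ) (v : n → ℂ) : evnorm (U *ᵥ v) = evnorm v := by
  have h : star (U *ᵥ v) ⬝ᵥ (U *ᵥ v) = star v ⬝ᵥ v := by
    rw [star_mulVec, dotProduct_mulVec, vecMul_vecMul, ← star_eq_conjTranspose, hU.1, vecMul_one]
  rw [star_dotProduct_self_eq, star_dotProduct_self_eq, Complex.ofReal_inj] at h
  rw [evnorm, evnorm, h]

theorem evnorm_diagonal_mulVec_le [DecidableEq n] {c : n → ℂ} {r : ℝ} (hr : 0 ≤ r)
    (hc : ∀ i, ‖c i‖ ≤ r) (v : n → ℂ) : evnorm (diagonal c *ᵥ v) ≤ r * evnorm v := by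
  rw [evnorm, evnorm, ← Real.sqrt_sq hr, ← Real.sqrt_mul (sq_nonneg r), Finset.mul_sum]
  gcongr with i
  rw [mulVec_diagonal, norm_mul, mul_pow]
  gcongr
  exact hc i

theorem evnorm_svd_mulVec_le [DecidableEq n] {U V : Matrix n n ℂ} (hU : U ∈ unitaryGroup n ℂ)
    (hV : V ∈ unitaryGroup n ℂ) {c : n → ℂ} {r : ℝ} (hr : 0 ≤ r) (hc : ∀ i, ‖c i‖ ≤ r)
    (v : n → ℂ) : evnorm ((U * diagonal c * Vᴴ) *ᵥ v) ≤ r * evnorm v := by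
  rw [← mulVec_mulVec, ← mulVec_mulVec, evnorm_mulVec_of_mem_unitaryGroup hU,
    ← evnorm_mulVec_of_mem_unitaryGroup (Unitary.star_mem hV) v, star_eq_conjTranspose]
  exact evnorm_diagonal_mulVec_le hr hc _

theorem evnorm_sumElim_sub_fromBlocks_mulVec {m : Type*} [Fintype m]
    (A : Matrix n n ℂ) (B : Matrix n m ℂ) (C : Matrix m n ℂ) (D : Matrix m m ℂ) (v : n → ℂ) :
    evnorm (Sum.elim (A *ᵥ v) 0 - fromBlocks A B C D *ᵥ Sum.elim v 0) = evnorm (C *ᵥ v) := by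
  simp [evnorm, fromBlocks_mulVec, Fintype.sum_sum_type]

end EuclideanNorm

theorem almost_unitary_embedding_general (d : ℕ) (δ : ℝ) (hδ1 : δ ≤ 1)
    (A U V : Matrix (Fin d) (Fin d) ℂ)
    (hU : U ∈ Matrix.unitaryGroup (Fin d) ℂ) (hV : V ∈ Matrix.unitaryGroup (Fin d) ℂ)
    (s : Fin d → ℝ) (hs1 : ∀ i, 1 - δ ≤ s i) (hs2 : ∀ i, s i ≤ 1)
    (hSVD : A = U * Matrix.diagonal (fun i => (s i : ℂ)) * Vᴴ)
    (B : Matrix (Fin d) (Fin d) ℂ)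
    (hB : B = U * Matrix.diagonal (fun i => (Complex.ofReal (Real.sqrt (1 - s i ^ 2)))) * Vᴴ)
    (A₀ : Matrix (Fin d ⊕ Fin d) (Fin d ⊕ Fin d) ℂ)
    (hA₀ : A₀ = Matrix.fromBlocks A (-B) B A) :
    A₀ ∈ Matrix.unitaryGroup (Fin d ⊕ Fin d) ℂ ∧
      ∀ φ : Fin d → ℂ, evnorm φ = 1 →
        evnorm (Sum.elim (A *ᵥ φ) 0 - A₀ *ᵥ (Sum.elim φ 0)) ≤ Real.sqrt (2 * δ) ∧
          evnorm (Sum.elim (Aᴴ *ᵥ φ) 0 - A₀ᴴ *ᵥ (Sum.elim φ 0)) ≤ Real.sqrt (2 * δ) := by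
  have hsq : ∀ i, s i ^ 2 + √(1 - s i ^ 2) ^ 2 = 1 := fun i => by
    rw [Real.sq_sqrt (by nlinarith [hs1 i, hs2 i])]
    ring
  -- `1 - s² = 2 (1 - s) - (1 - s)² ≤ 2δ`
  have hsin : ∀ i, ‖(√(1 - s i ^ 2) : ℂ)‖ ≤ √(2 * δ) := fun i => by
    rw [Complex.norm_real, Real.norm_of_nonneg (Real.sqrt_nonneg _)]
    exact Real.sqrt_le_sqrt (by nlinarith [hs1 i, hs2 i])
  refine ⟨?_, fun φ hφ => ⟨?_, ?_⟩⟩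
  · rw [hA₀, hSVD, hB]
    exact fromBlocks_svd_mem_unitaryGroup hU hV hsq
  · rw [hA₀, evnorm_sumElim_sub_fromBlocks_mulVec, hB]
    exact (evnorm_svd_mulVec_le hU hV (Real.sqrt_nonneg _) hsin φ).trans_eq (by rw [hφ, mul_one])
  · rw [hA₀, fromBlocks_conjTranspose, evnorm_sumElim_sub_fromBlocks_mulVec, conjTranspose_neg,
      neg_mulVec, evnorm_neg, hB, conjTranspose_svd]
    exact (evnorm_svd_mulVec_le hV hU (Real.sqrt_nonneg _)
      (fun i => (norm_star _).trans_le (hsin i)) φ).trans_eq (by rw [hφ, mul_one])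

/-- Embedding an almost-unitary matrix into a unitary: if the singular values of `A = U Σ V†`
lie in `[1−δ, 1]` and `B = U √(I−Σ²) V†`, then `A₀ = [[A, −B],[B, A]]` is unitary and, for every
unit vector `φ`, `‖|0⟩⊗(Aφ) − A₀(|0⟩⊗φ)‖ ≤ √(2δ)` and `‖|0⟩⊗(A†φ) − A₀†(|0⟩⊗φ)‖ ≤ √(2δ)`. -/
theorem almost_unitary_embedding (d : ℕ) (δ : ℝ) (hδ0 : 0 ≤ δ) (hδ1 : δ ≤ 1)
    (A U V : Matrix (Fin d) (Fin d) ℂ)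
    (hU : U ∈ Matrix.unitaryGroup (Fin d) ℂ) (hV : V ∈ Matrix.unitaryGroup (Fin d) ℂ)
    (s : Fin d → ℝ) (hs1 : ∀ i, 1 - δ ≤ s i) (hs2 : ∀ i, s i ≤ 1)
    (hSVD : A = U * Matrix.diagonal (fun i => (s i : ℂ)) * Vᴴ)
    (B : Matrix (Fin d) (Fin d) ℂ)
    (hB : B = U * Matrix.diagonal (fun i => (Complex.ofReal (Real.sqrt (1 - s i ^ 2)))) * Vᴴ)
    (A₀ : Matrix (Fin d ⊕ Fin d) (Fin d ⊕ Fin d) ℂ)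
    (hA₀ : A₀ = Matrix.fromBlocks A (-B) B A) :
    A₀ ∈ Matrix.unitaryGroup (Fin d ⊕ Fin d) ℂ ∧
      ∀ φ : Fin d → ℂ, evnorm φ = 1 →
        evnorm (Sum.elim (A *ᵥ φ) 0 - A₀ *ᵥ (Sum.elim φ 0)) ≤ Real.sqrt (2 * δ) ∧
          evnorm (Sum.elim (Aᴴ *ᵥ φ) 0 - A₀ᴴ *ᵥ (Sum.elim φ 0)) ≤ Real.sqrt (2 * δ) :=
  almost_unitary_embedding_general d δ hδ1 A U V hU hV s hs1 hs2 hSVD B hB A₀ hA₀
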